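/- arXiv:math/0309126 — 2 statements merged into one kernel-verified Lean document; each statement's English description precedes it below -/
import Mathlib

section
/- A nonzero two-sided ideal I of the incidence algebra A is indecomposable (cannot be written as the sum of two ideals each distinct from I) if and only if I is the principal ideal A[xy]A generated by a single generator [xy] for some pair x ≼ y. -/
open Classical in
/-- The generator `[xy]` of the incidence algebra over `ℂ`:
the "matrix unit" supported at `(x, y)` (zero unless `x ≤ y`). -/
noncomputable def gen {C : Type*} [PartialOrder C] (x y : C) :
    IncidenceAlgebra ℂ C :=
  ⟨fun a b => if a = x ∧ b = y ∧ x ≤ y then 1 else 0, by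
    intro a b hab
    try simp only
    rw [if_neg]
    rintro ⟨rfl, rfl, hxy⟩
    exact hab hxy⟩

/-- A two-sided ideal is indecomposable if it is nonzero and is not the sum (join)
of two ideals each distinct from itself. -/
def IsIndecomposable {R : Type*} [NonUnitalNonAssocRing R] (I : TwoSidedIdeal R) : Prop :=
  I ≠ ⊥ ∧ ∀ I₁ I₂ : TwoSidedIdeal R, I = I₁ ⊔ I₂ → I₁ = I ∨ I₂ = I

namespace IndecAux

variable {C : Type*} [Fintype C] [PartialOrder C] [DecidableEq C] [LocallyFiniteOrder C]

open Classical in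
lemma gen_apply (x y a b : C) :
    gen x y a b = if a = x ∧ b = y ∧ x ≤ y then 1 else 0 := by
  split_ifs with h
  · obtain ⟨rfl, rfl, hxy⟩ := h
    simp [gen, hxy]
  · simp [gen, h]

open Classical in
lemma gen_mul_gen {a b d : C} (hab : a ≤ b) (hbd : b ≤ d) :
    (gen a b : IncidenceAlgebra ℂ C) * gen b d = gen a d := by
  ext u v huv
  rw [IncidenceAlgebra.mul_apply]
  by_cases h : u = a ∧ v = d
  · obtain ⟨rfl, rfl⟩ := h
    rw [Finset.sum_eq_single b]
    · rw [gen_apply, gen_apply, gen_apply, if_pos ⟨rfl, rfl, hab⟩, if_pos ⟨rfl, rfl, hbd⟩,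
        if_pos ⟨rfl, rfl, hab.trans hbd⟩, one_mul]
    · intro w _ hwb
      rw [gen_apply, if_neg (fun hc => hwb hc.2.1), zero_mul]
    · intro hb; exact absurd (Finset.mem_Icc.mpr ⟨hab, hbd⟩) hb
  · rw [gen_apply, if_neg (fun hc => h ⟨hc.1, hc.2.1⟩)]
    apply Finset.sum_eq_zero
    intro w _
    by_cases hw : u = a
    · rw [gen_apply b d, if_neg, mul_zero]
      rintro ⟨rfl, rfl, -⟩; exact h ⟨hw, rfl⟩
    · rw [gen_apply, if_neg (fun hc => hw hc.1), zero_mul]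

open Classical in
lemma genDiag_mul_apply (a : C) (f : IncidenceAlgebra ℂ C) (u v : C) :
    ((gen a a : IncidenceAlgebra ℂ C) * f) u v = if u = a then f u v else 0 := by
  rw [IncidenceAlgebra.mul_apply]
  by_cases hu : u = a
  · subst hu
    rw [if_pos rfl]
    by_cases huv : u ≤ v
    · rw [Finset.sum_eq_single u]
      · rw [gen_apply, if_pos ⟨rfl, rfl, le_rfl⟩, one_mul]
      · intro w _ hwu; rw [gen_apply, if_neg (fun hc => hwu hc.2.1), zero_mul]
      · intro hc; exact absurd (Finset.mem_Icc.mpr ⟨le_rfl, huv⟩) hc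
    · rw [Finset.Icc_eq_empty huv, Finset.sum_empty,
        IncidenceAlgebra.apply_eq_zero_of_not_le huv f]
  · rw [if_neg hu]
    apply Finset.sum_eq_zero
    intro w _
    rw [gen_apply, if_neg (fun hc => hu hc.1), zero_mul]

open Classical in
lemma mul_genDiag_apply (b : C) (f : IncidenceAlgebra ℂ C) (u v : C) :
    (f * (gen b b : IncidenceAlgebra ℂ C)) u v = if v = b then f u v else 0 := by
  rw [IncidenceAlgebra.mul_apply]
  by_cases hv : v = b
  · subst hv
    rw [if_pos rfl]
    by_cases huv : u ≤ v
    · rw [Finset.sum_eq_single v]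
      · rw [gen_apply, if_pos ⟨rfl, rfl, le_rfl⟩, mul_one]
      · intro w _ hwv; rw [gen_apply, if_neg (fun hc => hwv hc.1), mul_zero]
      · intro hc; exact absurd (Finset.mem_Icc.mpr ⟨huv, le_rfl⟩) hc
    · rw [Finset.Icc_eq_empty huv, Finset.sum_empty,
        IncidenceAlgebra.apply_eq_zero_of_not_le huv f]
  · rw [if_neg hv]
    apply Finset.sum_eq_zero
    intro w _
    rw [gen_apply, if_neg (fun hc => hv hc.2.1), mul_zero]

open Classical in
lemma extract (f : IncidenceAlgebra ℂ C) (a b : C) :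
    (gen a a : IncidenceAlgebra ℂ C) * f * gen b b = f a b • gen a b := by
  ext u v huv
  rw [mul_genDiag_apply, genDiag_mul_apply, IncidenceAlgebra.constSMul_apply, gen_apply]
  by_cases hv : v = b
  · rw [if_pos hv]
    by_cases hu : u = a
    · subst hu; subst hv
      rw [if_pos rfl, if_pos ⟨rfl, rfl, huv⟩, smul_eq_mul, mul_one]
    · rw [if_neg hu, if_neg (fun hc => hu hc.1), smul_zero]
  · rw [if_neg hv, if_neg (fun hc => hv hc.2.1), smul_zero]

lemma smul_mem' (I : TwoSidedIdeal (IncidenceAlgebra ℂ C)) (c : ℂ)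
    {f : IncidenceAlgebra ℂ C} (hf : f ∈ I) : c • f ∈ I := by
  rw [Algebra.smul_def]
  exact I.mul_mem_left _ _ hf

lemma gen_mem_of_mem {I : TwoSidedIdeal (IncidenceAlgebra ℂ C)}
    {f : IncidenceAlgebra ℂ C} (hf : f ∈ I) {a b : C} (h : f a b ≠ 0) : gen a b ∈ I := by
  have h1 : (gen a a : IncidenceAlgebra ℂ C) * f * gen b b ∈ I :=
    I.mul_mem_right _ _ (I.mul_mem_left _ _ hf)
  rw [extract] at h1
  have h2 := smul_mem' I (f a b)⁻¹ h1
  rwa [smul_smul, inv_mul_cancel₀ h, one_smul] at h2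

/-- Evaluation at `(a, b)` as an additive monoid hom. -/
def evalHom (a b : C) : IncidenceAlgebra ℂ C →+ ℂ where
  toFun f := f a b
  map_zero' := rfl
  map_add' _ _ := rfl

open Classical in
lemma eq_sum_gen (f : IncidenceAlgebra ℂ C) :
    f = ∑ p : C × C, f p.1 p.2 • gen p.1 p.2 := by
  ext a b hab
  rw [show (∑ p : C × C, f p.1 p.2 • gen p.1 p.2) a b
      = ∑ p : C × C, (f p.1 p.2 • gen p.1 p.2) a b from map_sum (evalHom a b) _ _]
  rw [Finset.sum_eq_single (a, b)]
  · rw [IncidenceAlgebra.constSMul_apply, gen_apply, if_pos ⟨rfl, rfl, hab⟩, smul_eq_mul, mul_one]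
  · intro p _ hp
    rw [IncidenceAlgebra.constSMul_apply, gen_apply, if_neg, smul_zero]
    rintro ⟨h1, h2, -⟩
    exact hp (Prod.ext h1.symm h2.symm)
  · intro h; exact absurd (Finset.mem_univ _) h

lemma span_le' {s : Set (IncidenceAlgebra ℂ C)} {I : TwoSidedIdeal (IncidenceAlgebra ℂ C)}
    (h : s ⊆ I) : TwoSidedIdeal.span s ≤ I :=
  fun _ hx => TwoSidedIdeal.mem_span_iff.mp hx I h

lemma apply_ne_zero_of_mem_span (T : Set (C × C)) (f : IncidenceAlgebra ℂ C)
    (hf : f ∈ TwoSidedIdeal.span ((fun p : C × C => gen p.1 p.2) '' T))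
    (u v : C) (h : f u v ≠ 0) : ∃ p ∈ T, u ≤ p.1 ∧ p.2 ≤ v := by
  classical
  set J : TwoSidedIdeal (IncidenceAlgebra ℂ C) := TwoSidedIdeal.mk'
    {g : IncidenceAlgebra ℂ C | ∀ u v : C, g u v ≠ 0 → ∃ p ∈ T, u ≤ p.1 ∧ p.2 ≤ v}
    (fun u v h => absurd rfl h)
    (by
      intro x y hx hy u v h
      rw [IncidenceAlgebra.add_apply] at h
      by_cases hxu : x u v = 0
      · exact hy u v (by rwa [hxu, zero_add] at h)
      · exact hx u v hxu)
    (by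
      intro x hx u v h
      rw [IncidenceAlgebra.neg_apply, neg_ne_zero] at h
      exact hx u v h)
    (by
      intro x y hy u v h
      rw [IncidenceAlgebra.mul_apply] at h
      obtain ⟨w, hw, hne⟩ := Finset.exists_ne_zero_of_sum_ne_zero h
      have hyw : y w v ≠ 0 := fun h0 => hne (by rw [h0, mul_zero])
      obtain ⟨p, hp, h1, h2⟩ := hy w v hyw
      exact ⟨p, hp, le_trans (Finset.mem_Icc.mp hw).1 h1, h2⟩)
    (by
      intro x y hx u v h
      rw [IncidenceAlgebra.mul_apply] at h
      obtain ⟨w, hw, hne⟩ := Finset.exists_ne_zero_of_sum_ne_zero h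
      have hxw : x u w ≠ 0 := fun h0 => hne (by rw [h0, zero_mul])
      obtain ⟨p, hp, h1, h2⟩ := hx u w hxw
      exact ⟨p, hp, h1, le_trans h2 (Finset.mem_Icc.mp hw).2⟩)
  have hsub : ((fun p : C × C => gen p.1 p.2) '' T) ⊆ (J : Set (IncidenceAlgebra ℂ C)) := by
    rintro g ⟨p, hp, rfl⟩
    rw [SetLike.mem_coe, TwoSidedIdeal.mem_mk']
    intro u v hg
    rw [gen_apply] at hg
    by_cases hc : u = p.1 ∧ v = p.2 ∧ p.1 ≤ p.2
    · obtain ⟨rfl, rfl, -⟩ := hc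
      exact ⟨p, hp, le_rfl, le_rfl⟩
    · rw [if_neg hc] at hg; exact absurd rfl hg
  have := TwoSidedIdeal.mem_span_iff.mp hf J hsub
  rw [TwoSidedIdeal.mem_mk'] at this
  exact this u v h

lemma mem_span_gen {x y : C} (hxy : x ≤ y) (f : IncidenceAlgebra ℂ C)
    (h : ∀ u v, f u v ≠ 0 → u ≤ x ∧ y ≤ v) :
    f ∈ TwoSidedIdeal.span {(gen x y : IncidenceAlgebra ℂ C)} := by
  have hg : (gen x y : IncidenceAlgebra ℂ C) ∈ TwoSidedIdeal.span {gen x y} :=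
    TwoSidedIdeal.subset_span rfl
  rw [eq_sum_gen f]
  apply sum_mem
  intro p _
  by_cases hp : f p.1 p.2 = 0
  · rw [hp, zero_smul]; exact zero_mem _
  · obtain ⟨h1, h2⟩ := h p.1 p.2 hp
    apply smul_mem'
    have e1 : (gen x y : IncidenceAlgebra ℂ C) * gen y p.2 = gen x p.2 := gen_mul_gen hxy h2
    have e2 : (gen p.1 x : IncidenceAlgebra ℂ C) * gen x p.2 = gen p.1 p.2 :=
      gen_mul_gen h1 (hxy.trans h2)
    have m1 : (gen x y : IncidenceAlgebra ℂ C) * gen y p.2 ∈ TwoSidedIdeal.span {gen x y} :=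
      TwoSidedIdeal.mul_mem_right _ _ _ hg
    rw [e1] at m1
    have m2 : (gen p.1 x : IncidenceAlgebra ℂ C) * gen x p.2 ∈ TwoSidedIdeal.span {gen x y} :=
      TwoSidedIdeal.mul_mem_left _ _ _ m1
    rwa [e2] at m2

lemma gen_self_ne_zero {x y : C} (hxy : x ≤ y) : (gen x y : IncidenceAlgebra ℂ C) x y ≠ 0 := by
  rw [gen_apply, if_pos ⟨rfl, rfl, hxy⟩]
  exact one_ne_zero

end IndecAux

open IndecAux in
/-- A nonzero two-sided ideal of the incidence algebra is indecomposable iff it is the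
principal ideal generated by a single generator `[xy]`. -/
theorem indecomposable_iff_principal {C : Type*} [Fintype C] [PartialOrder C] [DecidableEq C] [LocallyFiniteOrder C]
    (I : TwoSidedIdeal (IncidenceAlgebra ℂ C)) :
    IsIndecomposable I ↔
      ∃ x y : C, x ≤ y ∧ I = TwoSidedIdeal.span {gen x y} := by
  constructor
  · rintro ⟨hne, hind⟩
    -- find a nonzero element of I
    have hex : ∃ f, f ∈ I ∧ f ≠ 0 := by
      by_contra hc
      push_neg at hc
      apply hne
      apply le_bot_iff.mp
      intro g hg
      rw [TwoSidedIdeal.mem_bot]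
      exact hc g hg
    obtain ⟨f, hfI, hf0⟩ := hex
    have hex2 : ∃ a b : C, f a b ≠ 0 := by
      by_contra hc
      push_neg at hc
      exact hf0 (by ext a b _; rw [hc a b]; rfl)
    obtain ⟨a, b, hab0⟩ := hex2
    set s : Set (C × C) := {p | gen p.1 p.2 ∈ I ∧ p.1 ≤ p.2} with hs_def
    have hsne : s.Nonempty :=
      ⟨(a, b), gen_mem_of_mem hfI hab0, IncidenceAlgebra.le_of_ne_zero hab0⟩
    obtain ⟨m, hm, hmin⟩ := Set.Finite.exists_minimalFor
      (fun p : C × C => (OrderDual.toDual p.1, p.2)) s (Set.toFinite s) hsne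
    obtain ⟨x, y⟩ := m
    obtain ⟨hgxy, hxy⟩ := hm
    refine ⟨x, y, hxy, ?_⟩
    set I₁ := TwoSidedIdeal.span {(gen x y : IncidenceAlgebra ℂ C)} with hI₁
    set T : Set (C × C) := s \ {(x, y)} with hT
    set I₂ := TwoSidedIdeal.span ((fun p : C × C => gen p.1 p.2) '' T) with hI₂
    have hdec : I = I₁ ⊔ I₂ := by
      apply le_antisymm
      · intro g hg
        rw [eq_sum_gen g]
        apply sum_mem
        intro p _
        by_cases hz : g p.1 p.2 = 0
        · rw [hz, zero_smul]; exact zero_mem _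
        · have hgen : gen p.1 p.2 ∈ I := gen_mem_of_mem hg hz
          have hps : p ∈ s := ⟨hgen, IncidenceAlgebra.le_of_ne_zero hz⟩
          by_cases hpxy : p = (x, y)
          · apply TwoSidedIdeal.mem_sup_left
            apply smul_mem'
            subst hpxy
            exact TwoSidedIdeal.subset_span rfl
          · apply TwoSidedIdeal.mem_sup_right
            apply smul_mem'
            exact TwoSidedIdeal.subset_span ⟨p, ⟨hps, hpxy⟩, rfl⟩
      · apply sup_le
        · apply span_le'
          intro g hg
          rw [Set.mem_singleton_iff] at hg
          subst hg
          exact hgxy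
        · apply span_le'
          rintro g ⟨p, ⟨hps, -⟩, rfl⟩
          exact hps.1
    rcases hind I₁ I₂ hdec with h1 | h1
    · exact h1.symm
    · exfalso
      have hgI₂ : (gen x y : IncidenceAlgebra ℂ C) ∈ I₂ := h1.symm ▸ hgxy
      obtain ⟨p, ⟨hps, hpne⟩, hle1, hle2⟩ :=
        apply_ne_zero_of_mem_span T (gen x y) hgI₂ x y (gen_self_ne_zero hxy)
      have := le_antisymm (hmin hps (Prod.mk_le_mk.mpr ⟨hle1, hle2⟩)) (Prod.mk_le_mk.mpr ⟨hle1, hle2⟩)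
      rw [Prod.ext_iff] at this
      exact hpne (Prod.ext (congrArg OrderDual.ofDual this.1).symm this.2.symm)
  · rintro ⟨x, y, hxy, rfl⟩
    constructor
    · intro hbot
      have hmem : (gen x y : IncidenceAlgebra ℂ C) ∈ (⊥ : TwoSidedIdeal (IncidenceAlgebra ℂ C)) :=
        hbot ▸ TwoSidedIdeal.subset_span rfl
      rw [TwoSidedIdeal.mem_bot] at hmem
      exact gen_self_ne_zero hxy (by rw [hmem]; rfl)
    · intro I₁ I₂ hsum
      have hg : (gen x y : IncidenceAlgebra ℂ C) ∈ I₁ ⊔ I₂ :=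
        hsum ▸ TwoSidedIdeal.subset_span rfl
      rw [TwoSidedIdeal.mem_sup] at hg
      obtain ⟨u, hu, w, hw, huw⟩ := hg
      have hsum1 : u x y + w x y = 1 := by
        have : (u + w) x y = (gen x y : IncidenceAlgebra ℂ C) x y := by rw [huw]
        rw [IncidenceAlgebra.add_apply, gen_apply, if_pos ⟨rfl, rfl, hxy⟩] at this
        exact this
      by_cases hux : u x y = 0
      · right
        have hwx : w x y ≠ 0 := by
          intro h0; rw [hux, h0, add_zero] at hsum1; exact zero_ne_one hsum1
        have hgI₂ : gen x y ∈ I₂ := gen_mem_of_mem hw hwx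
        apply le_antisymm
        · exact hsum ▸ le_sup_right
        · exact span_le' (Set.singleton_subset_iff.mpr hgI₂)
      · left
        have hgI₁ : gen x y ∈ I₁ := gen_mem_of_mem hu hux
        apply le_antisymm
        · exact hsum ▸ le_sup_left
        · exact span_le' (Set.singleton_subset_iff.mpr hgI₁)
end

section
/- The product of principal ideals satisfies: (A[xy]A)·(A[uv]A) equals A[xv]A if y ≼ u, and equals 0 otherwise. -/
/-- The product of two two-sided ideals: the two-sided ideal generated by pairwise products. -/
noncomputable def idealProd {R : Type*} [NonUnitalNonAssocRing R] (I J : TwoSidedIdeal R) :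
    TwoSidedIdeal R :=
  TwoSidedIdeal.span {z | ∃ a ∈ I, ∃ b ∈ J, z = a * b}

section Aux

open Finset

set_option linter.unusedSectionVars false

variable {C : Type*} [PartialOrder C] [DecidableEq C] [LocallyFiniteOrder C]

lemma gen_apply (x y a b : C) [Decidable (a = x ∧ b = y ∧ x ≤ y)] :
    gen x y a b = if a = x ∧ b = y ∧ x ≤ y then 1 else 0 := by
  simp only [gen, IncidenceAlgebra.coe_mk]
  split_ifs <;> rfl

lemma gen_mul_gen {p q r : C} (hpq : p ≤ q) (hqr : q ≤ r) :
    gen p q * gen q r = gen p r := by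
  classical
  ext a b _
  rw [IncidenceAlgebra.mul_apply, gen_apply]
  have key : ∀ c ∈ Icc a b, gen p q a c * gen q r c b =
      if c = q ∧ a = p ∧ b = r then 1 else 0 := by
    intro c _
    rcases eq_or_ne c q with rfl | hc
    · rw [gen_apply, gen_apply]
      by_cases h1 : a = p <;> by_cases h2 : b = r <;>
        simp [h1, h2, hpq, hqr]
    · rw [gen_apply, gen_apply, if_neg (fun h => hc h.2.1), zero_mul,
        if_neg (fun h => hc h.1)]
  rw [Finset.sum_congr rfl key]
  by_cases hP : a = p ∧ b = r
  · obtain ⟨rfl, rfl⟩ := hP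
    rw [if_pos ⟨rfl, rfl, hpq.trans hqr⟩]
    have : ∀ c ∈ Icc a b, (if c = q ∧ a = a ∧ b = b then (1:ℂ) else 0)
        = if c = q then 1 else 0 := by intro c _; simp
    rw [Finset.sum_congr rfl this, Finset.sum_ite_eq' (Icc a b) q (fun _ => (1:ℂ)),
      if_pos (mem_Icc.2 ⟨hpq, hqr⟩)]
  · rw [if_neg (by tauto)]
    apply Finset.sum_eq_zero
    intro c _
    rw [if_neg (by tauto)]

lemma iaSum_apply {ι : Type*} (s : Finset ι) (f : ι → IncidenceAlgebra ℂ C) (a b : C) :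
    (∑ i ∈ s, f i) a b = ∑ i ∈ s, f i a b := by
  classical
  induction s using Finset.induction with
  | empty => simp [IncidenceAlgebra.zero_apply]
  | insert _ _ h ih => simp [Finset.sum_insert h, IncidenceAlgebra.add_apply, ih]

/-- The two-sided ideal of elements supported on `{(a,b) : a ≤ x, y ≤ b}`. -/
noncomputable def suppIdeal (x y : C) : TwoSidedIdeal (IncidenceAlgebra ℂ C) :=
  TwoSidedIdeal.mk' {f | ∀ a b, f a b ≠ 0 → a ≤ x ∧ y ≤ b}
    (fun a b h => (h (IncidenceAlgebra.zero_apply a b)).elim)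
    (by
      intro f g hf hg a b h
      rw [IncidenceAlgebra.add_apply] at h
      by_cases hfa : f a b = 0
      · exact hg a b (by simpa [hfa] using h)
      · exact hf a b hfa)
    (by
      intro f hf a b h
      rw [IncidenceAlgebra.neg_apply, neg_ne_zero] at h
      exact hf a b h)
    (by
      intro f g hg a b h
      rw [IncidenceAlgebra.mul_apply] at h
      obtain ⟨c, hc, hne⟩ := Finset.exists_ne_zero_of_sum_ne_zero h
      have h2 := hg c b (right_ne_zero_of_mul hne)
      exact ⟨(Finset.mem_Icc.1 hc).1.trans h2.1, h2.2⟩)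
    (by
      intro f g hf a b h
      rw [IncidenceAlgebra.mul_apply] at h
      obtain ⟨c, hc, hne⟩ := Finset.exists_ne_zero_of_sum_ne_zero h
      have h1 := hf a c (left_ne_zero_of_mul hne)
      exact ⟨h1.1, h1.2.trans (Finset.mem_Icc.1 hc).2⟩)

lemma mem_suppIdeal_iff {x y : C} {f : IncidenceAlgebra ℂ C} :
    f ∈ suppIdeal x y ↔ ∀ a b, f a b ≠ 0 → a ≤ x ∧ y ≤ b := by
  simp only [suppIdeal, TwoSidedIdeal.mem_mk', Set.mem_setOf_eq]

lemma gen_mem_suppIdeal {x y a b : C} (ha : a ≤ x) (hb : y ≤ b) :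
    gen a b ∈ suppIdeal x y := by
  classical
  rw [mem_suppIdeal_iff]
  intro s t hst
  rw [gen_apply] at hst
  by_cases h : s = a ∧ t = b ∧ a ≤ b
  · obtain ⟨rfl, rfl, -⟩ := h
    exact ⟨ha, hb⟩
  · rw [if_neg h] at hst
    exact absurd rfl hst

variable [Fintype C]

lemma span_gen_eq_suppIdeal {x y : C} (hxy : x ≤ y) :
    TwoSidedIdeal.span {gen x y} = suppIdeal x y := by
  classical
  apply le_antisymm
  · intro z hz
    exact TwoSidedIdeal.mem_span_iff.1 hz _ (by
      rintro w rfl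
      exact gen_mem_suppIdeal le_rfl le_rfl)
  · intro f hf
    rw [mem_suppIdeal_iff] at hf
    have hdecomp : f = ∑ a : C, ∑ b : C, f a b • gen a b := by
      ext s t hst
      symm
      rw [iaSum_apply]
      have h1 : ∀ a ∈ Finset.univ, a ≠ s → (∑ b : C, f a b • gen a b) s t = 0 := by
        intro a _ ha
        rw [iaSum_apply]
        exact Finset.sum_eq_zero fun b _ => by
          rw [IncidenceAlgebra.constSMul_apply, gen_apply, if_neg (fun h => ha h.1.symm),
            smul_zero]
      rw [Finset.sum_eq_single_of_mem s (Finset.mem_univ s) h1, iaSum_apply]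
      have h2 : ∀ b ∈ Finset.univ, b ≠ t → (f s b • gen s b) s t = 0 := by
        intro b _ hb
        rw [IncidenceAlgebra.constSMul_apply, gen_apply, if_neg (fun h => hb h.2.1.symm),
          smul_zero]
      rw [Finset.sum_eq_single_of_mem t (Finset.mem_univ t) h2,
        IncidenceAlgebra.constSMul_apply, gen_apply, if_pos ⟨rfl, rfl, hst⟩, smul_eq_mul,
        mul_one]
    rw [hdecomp]
    apply TwoSidedIdeal.finsetSum_mem
    intro a _
    apply TwoSidedIdeal.finsetSum_mem
    intro b _
    by_cases hab : f a b = 0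
    · rw [hab, zero_smul]; exact TwoSidedIdeal.zero_mem _
    · obtain ⟨hax, hyb⟩ := hf a b hab
      have heq : f a b • gen a b =
          (algebraMap ℂ (IncidenceAlgebra ℂ C) (f a b) * gen a x) *
            (gen x y * gen y b) := by
        rw [gen_mul_gen hxy hyb, mul_assoc, gen_mul_gen hax (hxy.trans hyb), ← Algebra.smul_def]
      rw [heq]
      exact TwoSidedIdeal.mul_mem_left _ _ _
        (TwoSidedIdeal.mul_mem_right _ _ _ (TwoSidedIdeal.subset_span rfl))

end Aux

/-- `(A[xy]A) · (A[uv]A)` equals `A[xv]A` if `y ≤ u`, and `0` otherwise. -/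
theorem principal_ideal_product {C : Type*} [Fintype C] [PartialOrder C] [DecidableEq C] [LocallyFiniteOrder C]
    (x y u v : C) (hxy : x ≤ y) (huv : u ≤ v) :
    (y ≤ u → idealProd (TwoSidedIdeal.span {gen x y}) (TwoSidedIdeal.span {gen u v}) =
        TwoSidedIdeal.span {gen x v}) ∧
    (¬ y ≤ u → idealProd (TwoSidedIdeal.span {gen x y}) (TwoSidedIdeal.span {gen u v}) =
        ⊥) := by
  classical
  constructor
  · intro hyu
    have hxv : x ≤ v := hxy.trans (hyu.trans huv)
    apply le_antisymm
    · intro z hz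
      rw [span_gen_eq_suppIdeal hxv]
      refine TwoSidedIdeal.mem_span_iff.1 hz (suppIdeal x v) ?_
      rintro w ⟨a, ha, b, hb, rfl⟩
      rw [span_gen_eq_suppIdeal hxy, mem_suppIdeal_iff] at ha
      rw [span_gen_eq_suppIdeal huv, mem_suppIdeal_iff] at hb
      rw [SetLike.mem_coe, mem_suppIdeal_iff]
      intro s t hst
      rw [IncidenceAlgebra.mul_apply] at hst
      obtain ⟨c, _, hne⟩ := Finset.exists_ne_zero_of_sum_ne_zero hst
      exact ⟨(ha s c (left_ne_zero_of_mul hne)).1, (hb c t (right_ne_zero_of_mul hne)).2⟩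
    · intro z hz
      refine TwoSidedIdeal.mem_span_iff.1 hz _ ?_
      rintro w rfl
      rw [SetLike.mem_coe]
      refine TwoSidedIdeal.subset_span
        ⟨gen x y, TwoSidedIdeal.subset_span rfl, gen y v, ?_, ?_⟩
      · rw [span_gen_eq_suppIdeal huv]
        exact gen_mem_suppIdeal hyu le_rfl
      · rw [gen_mul_gen hxy (hyu.trans huv)]
  · intro hyu
    apply le_antisymm _ bot_le
    intro z hz
    refine TwoSidedIdeal.mem_span_iff.1 hz ⊥ ?_
    rintro w ⟨a, ha, b, hb, rfl⟩
    rw [span_gen_eq_suppIdeal hxy, mem_suppIdeal_iff] at ha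
    rw [span_gen_eq_suppIdeal huv, mem_suppIdeal_iff] at hb
    rw [SetLike.mem_coe, TwoSidedIdeal.mem_bot]
    ext s t _
    rw [IncidenceAlgebra.mul_apply, IncidenceAlgebra.zero_apply]
    apply Finset.sum_eq_zero
    intro c _
    by_contra hne
    exact hyu ((ha s c (left_ne_zero_of_mul hne)).2.trans
      (hb c t (right_ne_zero_of_mul hne)).1)
end
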